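/- arXiv:2409.08421 — 5 statements merged into one kernel-verified Lean document; each statement's English description precedes it below -/
import Mathlib

section
/- The ring M₃(ℤ) of 3 × 3 integer matrices has no prime partial ideals; that is, there is no subset 𝔭 of M₃(ℤ) such that for every commutative subring C of M₃(ℤ), the set C ∩ 𝔭 is a prime ideal of C. -/
/-!
A prime ideal of a commutative ring containing orthogonal idempotents `e₁, …, eₙ` contains
all of them but at most one (their products vanish), and not all of them if they sum to `1`.
Since orthogonal idempotents commute, the complement of a prime partial ideal therefore marks
exactly one idempotent in every decomposition of `1` into orthogonal idempotents: it is a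
Kochen–Specker colouring. A finite configuration of 24 rank-one idempotents in `M₃(ℤ)` admits
no such colouring.
-/

/-- A subset `𝔭` of a ring `R` is a *prime partial ideal* if for every commutative
subring `C` of `R`, the set `C ∩ 𝔭` is a prime ideal of `C`. -/
def IsPrimePartialIdeal {R : Type*} [Ring R] (𝔭 : Set R) : Prop :=
  ∀ C : Subring R, (∀ a ∈ C, ∀ b ∈ C, a * b = b * a) →
    ∃ I : Ideal C, I.IsPrime ∧ ∀ x : C, x ∈ I ↔ (x : R) ∈ 𝔭

structure IsKochenSpeckerColoring {R : Type*} [Ring R] (T : Set R) : Prop where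
  subsingleton {ι : Type} {e : ι → R} : OrthogonalIdempotents e → {i | e i ∈ T}.Subsingleton
  nonempty {ι : Type} [Fintype ι] {e : ι → R} : CompleteOrthogonalIdempotents e → ∃ i, e i ∈ T

theorem commute_of_pairwise_mul_eq_zero {M ι : Type*} [MulZeroClass M] {e : ι → M}
    (he : Pairwise fun i j ↦ e i * e j = 0) :
    ∀ a ∈ Set.range e, ∀ b ∈ Set.range e, a * b = b * a := by
  rintro _ ⟨i, rfl⟩ _ ⟨j, rfl⟩
  obtain rfl | hij := eq_or_ne i j
  · rfl
  · rw [he hij, he hij.symm]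

namespace IsPrimePartialIdeal

variable {R : Type*} [Ring R] {ι : Type*} {e : ι → R} {𝔭 : Set R}

theorem exists_isPrime_of_commute (h : IsPrimePartialIdeal 𝔭) {S : Set R}
    (hS : ∀ a ∈ S, ∀ b ∈ S, a * b = b * a) :
    ∃ C : Subring R, S ⊆ C ∧ ∃ I : Ideal C, I.IsPrime ∧ ∀ x : C, x ∈ I ↔ (x : R) ∈ 𝔭 :=
  ⟨Subring.centralizer S.centralizer, Set.subset_centralizer_centralizer,
    h _ (Set.centralizer_centralizer_comm_of_comm hS)⟩

theorem subsingleton_of_pairwise_mul_eq_zero (h : IsPrimePartialIdeal 𝔭)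
    (he : Pairwise fun i j ↦ e i * e j = 0) : {i | e i ∉ 𝔭}.Subsingleton := by
  obtain ⟨C, hC, I, hI, hI𝔭⟩ := h.exists_isPrime_of_commute (commute_of_pairwise_mul_eq_zero he)
  intro i hi j hj
  by_contra hij
  have hzero : (⟨e i, hC ⟨i, rfl⟩⟩ : C) * ⟨e j, hC ⟨j, rfl⟩⟩ = 0 := Subtype.ext (he hij)
  rcases hI.mem_or_mem (hzero ▸ I.zero_mem) with hmem | hmem
  · exact hi ((hI𝔭 _).mp hmem)
  · exact hj ((hI𝔭 _).mp hmem)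

theorem exists_not_mem_of_sum_eq_one (h : IsPrimePartialIdeal 𝔭) [Fintype ι]
    (he : Pairwise fun i j ↦ e i * e j = 0) (hsum : ∑ i, e i = 1) : ∃ i, e i ∉ 𝔭 := by
  obtain ⟨C, hC, I, hI, hI𝔭⟩ := h.exists_isPrime_of_commute (commute_of_pairwise_mul_eq_zero he)
  by_contra! hall
  have hone : ∑ i, (⟨e i, hC ⟨i, rfl⟩⟩ : C) = 1 := Subtype.ext (by simpa using hsum)
  have hmem : (1 : C) ∈ I := hone ▸ I.sum_mem fun i _ ↦ (hI𝔭 _).mpr (hall i)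
  exact hI.ne_top (I.eq_top_iff_one.mpr hmem)

theorem isKochenSpeckerColoring_compl (h : IsPrimePartialIdeal 𝔭) :
    IsKochenSpeckerColoring 𝔭ᶜ where
  subsingleton he := h.subsingleton_of_pairwise_mul_eq_zero he.ortho
  nonempty he := h.exists_not_mem_of_sum_eq_one he.ortho he.complete

end IsPrimePartialIdeal

namespace KochenSpecker

def idempotent : Fin 24 → Matrix (Fin 3) (Fin 3) ℤ :=
  ![!![0, 0, -1; 0, 0, 0; 0, 0, 1], !![0, 0, -1; 0, 0, 1; 0, 0, 1],
    !![0, 0, 0; 0, 0, -1; 0, 0, 1], !![0, 0, 0; 0, 0, 0; 0, 0, 1],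
    !![1, 0, 1; -1, 0, -1; 0, 0, 0], !![0, 0, 0; -1, 0, -1; 1, 0, 1],
    !![0, 0, 0; 0, 0, 0; 1, 0, 1], !![0, -1, 0; 0, 1, 0; 0, 0, 0],
    !![0, -1, 0; 0, 1, 0; 0, 1, 0], !![0, 0, 0; 0, 1, 0; 0, 0, 0],
    !![0, 0, 0; 0, 1, 0; 0, -1, 0], !![1, 1, 0; 0, 0, 0; -1, -1, 0],
    !![-1, -1, -1; 1, 1, 1; 1, 1, 1], !![0, 0, 0; 1, 1, 1; 0, 0, 0],
    !![0, 0, 0; 0, 0, 0; 1, 1, 1], !![2, 1, 1; 0, 0, 0; -2, -1, -1],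
    !![1, 0, 0; 0, 0, 0; -1, 0, 0], !![0, 0, 0; 1, 1, 0; 0, 0, 0],
    !![0, 0, 0; 1, 1, 0; -1, -1, 0], !![2, 1, 1; -2, -1, -1; 0, 0, 0],
    !![1, 0, 0; -1, 0, 0; 0, 0, 0], !![1, 0, 0; -1, 0, 0; -1, 0, 0],
    !![0, 0, 0; 2, 1, 1; 0, 0, 0], !![0, 0, 0; 0, 0, 0; 2, 1, 1]]

/- `context` lists all triples of these idempotents that are pairwise orthogonal (each sums
to `1`), and `orthogonalPair` the orthogonal pairs lying in no such triple. -/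

def context : Fin 16 → Fin 3 → Fin 24 :=
  ![![0, 4, 13], ![1, 4, 17], ![2, 13, 20], ![3, 17, 20], ![4, 11, 12], ![5, 12, 15],
    ![5, 13, 16], ![5, 21, 22], ![6, 8, 11], ![6, 9, 16], ![6, 17, 21], ![7, 11, 14],
    ![10, 14, 16], ![12, 18, 19], ![14, 18, 20], ![18, 21, 23]]

def orthogonalPair : Fin 12 → Fin 2 → Fin 24 :=
  ![![0, 7], ![0, 9], ![3, 7], ![3, 9], ![1, 19], ![1, 22], ![2, 19], ![2, 22],
    ![8, 15], ![8, 23], ![10, 15], ![10, 23]]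

theorem isIdempotentElem_idempotent (i : Fin 24) : IsIdempotentElem (idempotent i) := by
  revert i
  unfold IsIdempotentElem
  decide

theorem completeOrthogonalIdempotents_context (k : Fin 16) :
    CompleteOrthogonalIdempotents (idempotent ∘ context k) := by
  rw [CompleteOrthogonalIdempotents.iff_ortho_complete, Fin.sum_univ_three]
  revert k
  unfold Pairwise
  decide

theorem orthogonalIdempotents_orthogonalPair (k : Fin 12) :
    OrthogonalIdempotents (idempotent ∘ orthogonalPair k) := by
  refine ⟨fun i ↦ isIdempotentElem_idempotent _, ?_⟩
  revert k
  unfold Pairwise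
  decide

theorem not_exists_coloring :
    ¬ ∃ c : Fin 24 → Prop, (∀ k, ∃ j, c (context k j)) ∧
      (∀ k, {j | c (context k j)}.Subsingleton) ∧
      ∀ k, {j | c (orthogonalPair k j)}.Subsingleton := by
  rintro ⟨c, hexists, hunique, hpair⟩
  simp [Set.Subsingleton, Fin.forall_fin_succ, Fin.exists_fin_succ, context, orthogonalPair]
    at hexists hunique hpair
  grind

end KochenSpecker

open KochenSpecker in
theorem Matrix.not_isKochenSpeckerColoring_int (T : Set (Matrix (Fin 3) (Fin 3) ℤ)) :
    ¬ IsKochenSpeckerColoring T := fun hT ↦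
  not_exists_coloring ⟨fun i ↦ idempotent i ∈ T,
    fun k ↦ hT.nonempty (completeOrthogonalIdempotents_context k),
    fun k ↦ hT.subsingleton (completeOrthogonalIdempotents_context k).toOrthogonalIdempotents,
    fun k ↦ hT.subsingleton (orthogonalIdempotents_orthogonalPair k)⟩

/-- The ring `M₃(ℤ)` of `3 × 3` integer matrices has no prime partial ideals. -/
theorem no_prime_partial_ideal_matrix_int :
    ¬ ∃ 𝔭 : Set (Matrix (Fin 3) (Fin 3) ℤ), IsPrimePartialIdeal 𝔭 := by
  rintro ⟨𝔭, h⟩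
  exact Matrix.not_isKochenSpeckerColoring_int _ h.isKochenSpeckerColoring_compl
end

section
/- If f : R → S is a homomorphism of rings and 𝔭 is a prime partial ideal of S, then f⁻¹(𝔭) is a prime partial ideal of R. -/
lemma RingHom.mul_comm_of_mem_range {A S : Type*} [Ring A] [Ring S] (g : A →+* S)
    (hA : ∀ a b : A, a * b = b * a) : ∀ x ∈ g.range, ∀ y ∈ g.range, x * y = y * x := by
  rintro _ ⟨a, rfl⟩ _ ⟨b, rfl⟩
  rw [← map_mul, ← map_mul, hA]

lemma IsPrimePartialIdeal.exists_isPrime_comap {A S : Type*} [Ring A] [Ring S] {𝔭 : Set S}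
    (h : IsPrimePartialIdeal 𝔭) (g : A →+* S) (hA : ∀ a b : A, a * b = b * a) :
    ∃ I : Ideal A, I.IsPrime ∧ ∀ x : A, x ∈ I ↔ g x ∈ 𝔭 := by
  obtain ⟨J, hJ, hJ_mem⟩ := h g.range (g.mul_comm_of_mem_range hA)
  exact ⟨J.comap g.rangeRestrict, hJ.comap _, fun x => hJ_mem (g.rangeRestrict x)⟩

/-- The preimage of a prime partial ideal under a ring homomorphism is a prime
partial ideal. -/
theorem isPrimePartialIdeal_preimage {R S : Type*} [Ring R] [Ring S] (f : R →+* S)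
    (𝔭 : Set S) (h : IsPrimePartialIdeal 𝔭) : IsPrimePartialIdeal (f ⁻¹' 𝔭) := fun C hC =>
  h.exists_isPrime_comap (f.comp C.subtype) fun a b => Subtype.ext (hC a a.2 b b.2)
end

section
/- Let F be a functor from the opposite of the category of rings to the category of sets together with a natural isomorphism α between the restriction of F to commutative rings and Spec. Then there exists a unique natural transformation η : F → pSpec whose component at every commutative ring C equals α_C (under the identification pSpec(C) = Spec(C)). -/
open CategoryTheory

/-- The preimage of a prime partial ideal under a ring homomorphism is a prime
partial ideal. -/
theorem IsPrimePartialIdeal.preimage {R S : Type*} [Ring R] [Ring S] (f : R →+* S)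
    {𝔭 : Set S} (h : IsPrimePartialIdeal 𝔭) : IsPrimePartialIdeal (f ⁻¹' 𝔭) := by
  intro C hC
  obtain ⟨I, hI, hmem⟩ := h (C.map f) (by
    rintro _ ⟨a, ha, rfl⟩ _ ⟨b, hb, rfl⟩
    rw [← map_mul, ← map_mul, hC a ha b hb])
  let g : C →+* C.map f := RingHom.codRestrict (f.comp C.subtype) (C.map f)
    (fun x => Subring.mem_map.mpr ⟨x.1, x.2, rfl⟩)
  refine ⟨Ideal.comap g I, ⟨?_, ?_⟩, ?_⟩
  · intro htop
    apply hI.ne_top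
    rw [Ideal.eq_top_iff_one] at htop ⊢
    simpa using (Ideal.mem_comap.mp htop)
  · intro x y hxy
    exact hI.mem_or_mem (by simpa [map_mul] using Ideal.mem_comap.mp hxy)
  · intro x
    rw [Ideal.mem_comap, hmem (g x)]
    exact Iff.rfl

/-- The prime spectrum, as a contravariant functor from commutative rings to sets. -/
def specFunctor : CommRingCatᵒᵖ ⥤ Type where
  obj C := PrimeSpectrum C.unop
  map f := TypeCat.ofHom (PrimeSpectrum.comap f.unop.hom)
  map_id _ := rfl
  map_comp f g := rfl

/-- The partial spectrum, as a contravariant functor from rings to sets, sending a ring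
to its set of prime partial ideals and a ring homomorphism to the preimage map. -/
def pSpecFunctor : RingCatᵒᵖ ⥤ Type where
  obj R := {𝔭 : Set R.unop // IsPrimePartialIdeal 𝔭}
  map f := TypeCat.ofHom fun p => ⟨f.unop.hom ⁻¹' p.1, p.2.preimage f.unop.hom⟩
  map_id _ := rfl
  map_comp _ _ := rfl

/-!
The value of `η` at `x ∈ F(R)` is forced: `r ∈ R` lies in it iff `r` lies in the prime ideal
`α(x|ℤ[r])` of the commutative subring `ℤ[r]` generated by `r`. Naturality of `α` shows that
this membership can be tested on any commutative ring mapping to `R` and hitting `r`, which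
gives at once primality on every commutative subring, naturality in `R`, and agreement with `α`
on commutative rings. Any other `η` agreeing with `α` passes the same test by its own
naturality along `ℤ[r] → R`, whence uniqueness.
-/

open Opposite
open scoped IsMulCommutative

namespace Subring

variable {R : Type*} [Ring R]

instance isMulCommutative_closure_singleton (r : R) :
    IsMulCommutative (closure ({r} : Set R)) :=
  isMulCommutative_closure (by simp)

instance isMulCommutative_range {A : Type*} [CommRing A] (f : A →+* R) :
    IsMulCommutative f.range :=
  .of_setLike_mul_comm <| by
    rintro _ ⟨a, rfl⟩ _ ⟨b, rfl⟩
    rw [← map_mul, mul_comm, map_mul]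

abbrev toCommRingCat (C : Subring R) [IsMulCommutative C] : CommRingCat :=
  CommRingCat.of C

end Subring

abbrev RingCat.subringInclusion {R : RingCat} (C : Subring R) [IsMulCommutative C] :
    (forget₂ CommRingCat RingCat).obj C.toCommRingCat ⟶ R :=
  RingCat.ofHom C.subtype

section PartialPrime

variable {F : RingCatᵒᵖ ⥤ Type} (α : (forget₂ CommRingCat RingCat).op ⋙ F ⟶ specFunctor)

def specPullback {R : RingCat} (x : F.obj (op R)) {A : CommRingCat}
    (g : (forget₂ CommRingCat RingCat).obj A ⟶ R) : PrimeSpectrum A :=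
  α.app (op A) (F.map g.op x)

theorem specPullback_id {A : CommRingCat} (x : F.obj (op ((forget₂ CommRingCat RingCat).obj A))) :
    specPullback α x (𝟙 _) = α.app (op A) x := by
  simp only [specPullback, op_id, Functor.map_id_apply]
  rfl

theorem specPullback_map {R S : RingCat} (f : R ⟶ S) (x : F.obj (op S)) {A : CommRingCat}
    (g : (forget₂ CommRingCat RingCat).obj A ⟶ R) :
    specPullback α (F.map f.op x) g = specPullback α x (g ≫ f) := by
  simp only [specPullback, op_comp, Functor.map_comp_apply]
  rfl

theorem mem_specPullback_comp_iff {R : RingCat} (x : F.obj (op R)) {A B : CommRingCat} (h : A ⟶ B)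
    (g : (forget₂ CommRingCat RingCat).obj B ⟶ R) (a : A) :
    a ∈ (specPullback α x ((forget₂ CommRingCat RingCat).map h ≫ g)).asIdeal ↔
      h a ∈ (specPullback α x g).asIdeal := by
  have hnat := NatTrans.naturality_apply α h.op (F.map g.op x)
  simp only [specPullback, op_comp, Functor.map_comp_apply]
  exact iff_of_eq (congrArg (fun P : PrimeSpectrum A => a ∈ P.asIdeal) hnat)

def partialPrimeOf {R : RingCat} (x : F.obj (op R)) : Set R :=
  { r | (⟨r, Subring.subset_closure rfl⟩ : Subring.closure ({r} : Set R)) ∈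
      (specPullback α x (RingCat.subringInclusion (Subring.closure {r}))).asIdeal }

/-- Both `A` and `ℤ[g a]` map into the commutative subring `g(A)` of `R`, so both sides are
tested there. -/
theorem mem_partialPrimeOf_iff {R : RingCat} (x : F.obj (op R)) {A : CommRingCat}
    (g : (forget₂ CommRingCat RingCat).obj A ⟶ R) (a : A) :
    g a ∈ partialPrimeOf α x ↔ a ∈ (specPullback α x g).asIdeal := by
  let D := g.hom.range
  have hle : Subring.closure {g a} ≤ D := Subring.closure_le.mpr (by simp [D])
  let p : A ⟶ D.toCommRingCat := CommRingCat.ofHom g.hom.rangeRestrict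
  let i : (Subring.closure {g a}).toCommRingCat ⟶ D.toCommRingCat :=
    CommRingCat.ofHom (Subring.inclusion hle)
  have hg : (forget₂ CommRingCat RingCat).map p ≫ RingCat.subringInclusion D = g := rfl
  have hi : (forget₂ CommRingCat RingCat).map i ≫ RingCat.subringInclusion D =
      RingCat.subringInclusion (Subring.closure {g a}) := rfl
  have hp := mem_specPullback_comp_iff α x p (RingCat.subringInclusion D) a
  have hr := mem_specPullback_comp_iff α x i (RingCat.subringInclusion D)
    ⟨g a, Subring.subset_closure rfl⟩
  rw [hg] at hp
  rw [hi] at hr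
  exact hr.trans hp.symm

theorem isPrimePartialIdeal_partialPrimeOf {R : RingCat} (x : F.obj (op R)) :
    IsPrimePartialIdeal (partialPrimeOf α x) := by
  intro C hC
  have : IsMulCommutative C := .of_setLike_mul_comm hC
  exact ⟨_, (specPullback α x (RingCat.subringInclusion C)).isPrime,
    fun y => (mem_partialPrimeOf_iff α x (RingCat.subringInclusion C) y).symm⟩

theorem partialPrimeOf_map {R S : RingCat} (f : R ⟶ S) (x : F.obj (op S)) :
    partialPrimeOf α (F.map f.op x) = f ⁻¹' partialPrimeOf α x := by
  ext r
  change _ ∈ (specPullback α (F.map f.op x) _).asIdeal ↔ _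
  rw [specPullback_map]
  exact (mem_partialPrimeOf_iff α x (RingCat.subringInclusion (Subring.closure {r}) ≫ f) _).symm

theorem partialPrimeOf_forget₂ (C : CommRingCat)
    (x : F.obj (op ((forget₂ CommRingCat RingCat).obj C))) :
    partialPrimeOf α x = (α.app (op C) x).asIdeal := by
  ext r
  rw [← specPullback_id]
  exact mem_partialPrimeOf_iff α x (𝟙 _) r

def partialPrimeNatTrans : F ⟶ pSpecFunctor where
  app R := TypeCat.ofHom fun x => ⟨partialPrimeOf α x, isPrimePartialIdeal_partialPrimeOf α x⟩
  naturality R S f := by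
    ext x
    exact Subtype.ext (partialPrimeOf_map α f.unop x)

section Uniqueness

variable (η : F ⟶ pSpecFunctor)
  (hη : ∀ (C : CommRingCat) (x : F.obj (op ((forget₂ CommRingCat RingCat).obj C))),
    (η.app (op ((forget₂ CommRingCat RingCat).obj C)) x).1 = (α.app (op C) x).asIdeal)
include hη

theorem mem_natTrans_app_iff {R : RingCat} (x : F.obj (op R)) {A : CommRingCat}
    (g : (forget₂ CommRingCat RingCat).obj A ⟶ R) (a : A) :
    g a ∈ (η.app (op R) x).1 ↔ a ∈ (specPullback α x g).asIdeal := by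
  have hrestrict : (η.app _ (F.map g.op x)).1 = g ⁻¹' (η.app (op R) x).1 :=
    congrArg Subtype.val (NatTrans.naturality_apply η g.op x)
  rw [specPullback, ← SetLike.mem_coe, ← hη, hrestrict]
  rfl

theorem eq_partialPrimeNatTrans : η = partialPrimeNatTrans α := by
  refine NatTrans.ext (funext fun R => ?_)
  ext x
  exact Subtype.ext <| Set.ext fun r => mem_natTrans_app_iff α η hη x
    (RingCat.subringInclusion (Subring.closure {r})) ⟨r, Subring.subset_closure rfl⟩

end Uniqueness

end PartialPrime

/-- Given a functor `F : Ringᵒᵖ ⥤ Set` together with a natural isomorphism `α` between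
its restriction to commutative rings and `Spec`, there is a unique natural transformation
`η : F ⟶ pSpec` whose component at every commutative ring `C` equals `α_C` under the
identification of `pSpec C` with `Spec C` (a prime ideal being identified with its
underlying set). -/
theorem exists_unique_natTrans_to_pSpec
    (F : RingCatᵒᵖ ⥤ Type)
    (α : (forget₂ CommRingCat RingCat).op ⋙ F ≅ specFunctor) :
    ∃! η : F ⟶ pSpecFunctor,
      ∀ (C : CommRingCat)
        (x : F.obj (Opposite.op ((forget₂ CommRingCat RingCat).obj C))),
        (Subtype.val (η.app (Opposite.op ((forget₂ CommRingCat RingCat).obj C)) x) : Set C)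
          = ((α.hom.app (Opposite.op C) x).asIdeal : Set C) :=
  ⟨partialPrimeNatTrans α.hom, partialPrimeOf_forget₂ α.hom,
    eq_partialPrimeNatTrans α.hom⟩
end

section
/- The set of prime partial ideals of the ring M₂(ℂ) of 2 × 2 complex matrices has cardinality 2^(2^ℵ₀). In particular, M₂(ℂ) has a prime partial ideal. -/
theorem Function.Involutive.exists_transversal {X ι : Type*} {σ : X → X}
    (hσ : Function.Involutive σ) {f : ι → X} (hf : Function.Injective f)
    (hσf : ∀ i j, σ (f i) ≠ f j) (g : Set ι) :
    ∃ S : Set X, (∀ x, σ x ≠ x → (σ x ∈ S ↔ x ∉ S)) ∧ ∀ i, f i ∈ S ↔ i ∈ g := by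
  classical
  refine ⟨{x | if x ∈ Set.range f then x ∈ f '' g
      else if σ x ∈ Set.range f then σ x ∉ f '' g else WellOrderingRel x (σ x)}, ?_, ?_⟩
  · intro x hx
    by_cases hx₁ : x ∈ Set.range f
    · have hx₂ : σ x ∉ Set.range f := by
        rintro ⟨j, hj⟩
        obtain ⟨i, rfl⟩ := hx₁
        exact hσf i j hj.symm
      simp only [Set.mem_ofPred_eq, if_pos hx₁, if_neg hx₂, hσ x]
    by_cases hx₂ : σ x ∈ Set.range f
    · simp only [Set.mem_ofPred_eq, if_pos hx₂, if_neg hx₁, hσ x, not_not]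
    · simp only [Set.mem_ofPred_eq, if_neg hx₁, if_neg hx₂, hσ x]
      exact ⟨fun h h' => asymm h h', fun h =>
        (trichotomous_of WellOrderingRel x (σ x)).resolve_left h |>.resolve_left hx.symm⟩
  · intro i
    simp only [Set.mem_ofPred_eq, if_pos (Set.mem_range_self i), hf.mem_set_image]

def IsIdempotentTransversal {R : Type*} [Ring R] (S : Set R) : Prop :=
  ∀ e : R, IsIdempotentElem e → (1 - e ∈ S ↔ e ∉ S)

theorem IsIdempotentElem.one_sub_ne_self {R : Type*} [Ring R] [Nontrivial R] {e : R}
    (he : IsIdempotentElem e) : 1 - e ≠ e := by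
  intro h
  have he0 : e = 0 := by rw [← he.one_sub_mul_self, h, he.eq]
  rw [he0, sub_zero] at h
  exact one_ne_zero h

open Cardinal

namespace Matrix

variable {K : Type*} [Field K] {e m : Matrix (Fin 2) (Fin 2) K}

def partialIdealOf (S : Set (Matrix (Fin 2) (Fin 2) K)) : Set (Matrix (Fin 2) (Fin 2) K) :=
  {m | m.det = 0 ∧ (m.trace = 0 ∨ m.trace⁻¹ • m ∈ S)}

theorem det_eq_zero_of_isIdempotentElem_of_trace_eq_one (he : IsIdempotentElem e)
    (htr : e.trace = 1) : e.det = 0 := by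
  have h00 := congrFun₂ he.eq 0 0
  simp only [mul_apply, Fin.sum_univ_two] at h00
  rw [trace_fin_two] at htr
  rw [det_fin_two]
  linear_combination -h00 + e 0 0 * htr

theorem trace_one_sub_of_trace_eq_one (htr : e.trace = 1) : (1 - e).trace = 1 := by
  rw [trace_sub, trace_one, htr, Fintype.card_fin]
  norm_num

theorem mul_mul_eq_trace_mul_smul_of_det_eq_zero (hdet : e.det = 0) :
    e * m * e = (e * m).trace • e := by
  rw [det_fin_two] at hdet
  ext i j
  fin_cases i <;> fin_cases j <;>
    simp only [Fin.zero_eta, Fin.mk_one, Fin.isValue, mul_apply, Fin.sum_univ_two, trace_fin_two,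
      smul_apply, smul_eq_mul]
  · linear_combination -m 1 1 * hdet
  · linear_combination m 0 1 * hdet
  · linear_combination m 1 0 * hdet
  · linear_combination -m 0 0 * hdet

theorem mul_eq_trace_smul_of_commute (he : IsIdempotentElem e) (htr : e.trace = 1)
    (hm : Commute e m) : e * m = (e * m).trace • e := by
  rw [← mul_mul_eq_trace_mul_smul_of_det_eq_zero
      (det_eq_zero_of_isIdempotentElem_of_trace_eq_one he htr),
    mul_assoc, ← hm.eq, ← mul_assoc, he.eq]

theorem eq_smul_add_smul_one_sub_of_commute (he : IsIdempotentElem e) (htr : e.trace = 1)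
    (hm : Commute e m) : m = (e * m).trace • e + ((1 - e) * m).trace • (1 - e) := by
  rw [← mul_eq_trace_smul_of_commute he htr hm,
    ← mul_eq_trace_smul_of_commute he.one_sub (trace_one_sub_of_trace_eq_one htr)
      ((Commute.one_left m).sub_left hm)]
  noncomm_ring

theorem det_smul_add_smul_one_sub (he : IsIdempotentElem e) (htr : e.trace = 1) (x y : K) :
    (x • e + y • (1 - e)).det = x * y := by
  have hdet := det_eq_zero_of_isIdempotentElem_of_trace_eq_one he htr
  rw [det_fin_two] at hdet ⊢
  rw [trace_fin_two] at htr
  simp only [add_apply, smul_apply, sub_apply, one_apply_eq, one_apply_ne, ne_eq,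
    Fin.zero_eq_one_iff, Fin.one_eq_zero_iff, OfNat.ofNat_ne_one, not_false_eq_true, smul_eq_mul]
  linear_combination (x - y) ^ 2 * hdet + y * (x - y) * htr

theorem trace_smul_add_smul_one_sub (htr : e.trace = 1) (x y : K) :
    (x • e + y • (1 - e)).trace = x + y := by
  rw [trace_add, trace_smul, trace_smul, htr, trace_one_sub_of_trace_eq_one htr, smul_eq_mul,
    smul_eq_mul, mul_one, mul_one]

theorem mem_partialIdealOf_iff_of_det_eq_zero_of_trace_eq_one {S : Set (Matrix (Fin 2) (Fin 2) K)}
    (hdet : e.det = 0) (htr : e.trace = 1) : e ∈ partialIdealOf S ↔ e ∈ S := by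
  simp [partialIdealOf, hdet, htr]

theorem smul_add_smul_one_sub_mem_partialIdealOf_iff {S : Set (Matrix (Fin 2) (Fin 2) K)}
    (hS : IsIdempotentTransversal S) (he : IsIdempotentElem e) (htr : e.trace = 1) (heS : e ∈ S)
    (x y : K) : x • e + y • (1 - e) ∈ partialIdealOf S ↔ y = 0 := by
  rw [partialIdealOf, Set.mem_ofPred_eq, det_smul_add_smul_one_sub he htr,
    trace_smul_add_smul_one_sub htr]
  constructor
  · rintro ⟨hxy, hx_or⟩
    by_contra hy
    obtain rfl : x = 0 := (mul_eq_zero.mp hxy).resolve_right hy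
    rw [zero_smul, zero_add, zero_add, smul_smul, inv_mul_cancel₀ hy, one_smul] at hx_or
    exact (hS e he).mp (hx_or.resolve_left hy) heS
  · rintro rfl
    rw [mul_zero, add_zero, zero_smul, add_zero]
    refine ⟨rfl, or_iff_not_imp_left.mpr fun hx => ?_⟩
    rwa [smul_smul, inv_mul_cancel₀ hx, one_smul]

theorem mem_partialIdealOf_iff_of_commute {S : Set (Matrix (Fin 2) (Fin 2) K)}
    (hS : IsIdempotentTransversal S) (he : IsIdempotentElem e) (htr : e.trace = 1) (heS : e ∈ S)
    (hm : Commute e m) : m ∈ partialIdealOf S ↔ ((1 - e) * m).trace = 0 := by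
  conv_lhs => rw [eq_smul_add_smul_one_sub_of_commute he htr hm]
  exact smul_add_smul_one_sub_mem_partialIdealOf_iff hS he htr heS _ _

theorem mem_partialIdealOf_iff_of_trace_sq_eq [NeZero (2 : K)]
    {S : Set (Matrix (Fin 2) (Fin 2) K)} (hm : m.trace ^ 2 = 4 * m.det) :
    m ∈ partialIdealOf S ↔ m.trace = 0 := by
  have h4 : (4 : K) ≠ 0 := by
    rw [show (4 : K) = 2 * 2 by norm_num]
    exact mul_ne_zero two_ne_zero two_ne_zero
  constructor
  · rintro ⟨hdet, -⟩
    rw [hdet, mul_zero] at hm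
    exact pow_eq_zero_iff two_ne_zero |>.mp hm
  · intro htr
    rw [htr, zero_pow two_ne_zero] at hm
    exact ⟨(mul_eq_zero.mp hm.symm).resolve_left h4, Or.inl htr⟩

def traceMulHom (he : IsIdempotentElem e) (htr : e.trace = 1) :
    Subring.centralizer {e} →+* K where
  toFun m := (e * m).trace
  map_one' := by rw [Subring.coe_one, mul_one, htr]
  map_mul' m n := by
    have hm : Commute e m := (Subring.mem_centralizer_iff.mp m.2 e rfl)
    rw [Subring.coe_mul, ← mul_assoc]
    conv_lhs => rw [mul_eq_trace_smul_of_commute he htr hm]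
    rw [smul_mul_assoc, trace_smul, smul_eq_mul]
  map_zero' := by rw [Subring.coe_zero, mul_zero, trace_zero]
  map_add' m n := by rw [Subring.coe_add, mul_add, trace_add]

theorem trace_mul_div_two [NeZero (2 : K)] {m n : Matrix (Fin 2) (Fin 2) K}
    (hm : m.trace ^ 2 = 4 * m.det) (hn : n.trace ^ 2 = 4 * n.det)
    (hmn : (m + n).trace ^ 2 = 4 * (m + n).det) :
    (m * n).trace / 2 = m.trace / 2 * (n.trace / 2) := by
  have h2 : (2 : K) ≠ 0 := two_ne_zero
  simp only [trace_fin_two, det_fin_two, add_apply, mul_apply, Fin.sum_univ_two] at *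
  field_simp
  apply mul_left_cancel₀ h2
  linear_combination hmn - hm - hn

def halfTraceHom [NeZero (2 : K)] (C : Subring (Matrix (Fin 2) (Fin 2) K))
    (hC : ∀ m ∈ C, m.trace ^ 2 = 4 * m.det) : C →+* K where
  toFun m := (m : Matrix (Fin 2) (Fin 2) K).trace / 2
  map_one' := by simp [two_ne_zero]
  map_mul' m n := trace_mul_div_two (hC m m.2) (hC n n.2) (hC _ (C.add_mem m.2 n.2))
  map_zero' := by simp
  map_add' m n := by simp [add_div]

theorem exists_isIdempotentElem_commute [IsSepClosed K] [NeZero (2 : K)]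
    {a : Matrix (Fin 2) (Fin 2) K} (ha : a.trace ^ 2 ≠ 4 * a.det) :
    ∃ e, IsIdempotentElem e ∧ e.trace = 1 ∧ ∀ m, Commute a m → Commute e m := by
  obtain ⟨s, hs⟩ := IsSepClosed.exists_eq_mul_self (a.trace ^ 2 - 4 * a.det)
  have hs0 : s ≠ 0 := by rintro rfl; exact ha (by linear_combination hs)
  have h2 : (2 : K) ≠ 0 := two_ne_zero
  -- `s` is the difference of the eigenvalues `λ₁ - λ₂`, and `e = (a - λ₂) / (λ₁ - λ₂)`.
  refine ⟨(2 * s)⁻¹ • ((2 : K) • a + (s - a.trace) • 1), ?_, ?_, fun m hm => ?_⟩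
  · rw [trace_fin_two, det_fin_two] at hs
    rw [IsIdempotentElem]
    ext i j
    fin_cases i <;> fin_cases j <;>
      simp only [trace_fin_two, Fin.isValue, smul_add, Fin.zero_eta, Fin.mk_one,
        mul_apply, add_apply, smul_apply, smul_eq_mul, one_apply, mul_ite, mul_one, mul_zero,
        Fin.sum_univ_two, ↓reduceIte, zero_ne_one, one_ne_zero, add_zero] <;>
      field_simp <;> first | linear_combination hs | ring
  · rw [trace_smul, trace_add, trace_smul, trace_smul, trace_one, Fintype.card_fin, smul_eq_mul,
      smul_eq_mul, smul_eq_mul, Nat.cast_ofNat]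
    field_simp
    ring
  · exact ((hm.smul_left 2).add_left ((Commute.one_left m).smul_left _)).smul_left _

theorem exists_ringHom_of_forall_commute {S : Set (Matrix (Fin 2) (Fin 2) K)}
    (hS : IsIdempotentTransversal S) (he : IsIdempotentElem e) (htr : e.trace = 1)
    {C : Subring (Matrix (Fin 2) (Fin 2) K)} (hC : ∀ m ∈ C, Commute e m) :
    ∃ χ : C →+* K, ∀ m : C, (m : Matrix (Fin 2) (Fin 2) K) ∈ partialIdealOf S ↔ χ m = 0 := by
  wlog heS : e ∈ S generalizing e
  · exact this he.one_sub (trace_one_sub_of_trace_eq_one htr)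
      (fun m hm => (Commute.one_left m).sub_left (hC m hm)) ((hS e he).mpr heS)
  have hC' : C ≤ Subring.centralizer {1 - e} := fun m hm =>
    Subring.mem_centralizer_iff.mpr fun _ h => h ▸ ((Commute.one_left m).sub_left (hC m hm)).eq
  exact ⟨(traceMulHom he.one_sub (trace_one_sub_of_trace_eq_one htr)).comp
    (Subring.inclusion hC'), fun m => mem_partialIdealOf_iff_of_commute hS he htr heS (hC m m.2)⟩

theorem isPrimePartialIdeal_partialIdealOf [IsSepClosed K] [NeZero (2 : K)]
    {S : Set (Matrix (Fin 2) (Fin 2) K)} (hS : IsIdempotentTransversal S) :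
    IsPrimePartialIdeal (partialIdealOf S) := by
  intro C hC
  suffices ∃ χ : C →+* K, ∀ m : C, (m : Matrix (Fin 2) (Fin 2) K) ∈ partialIdealOf S ↔ χ m = 0 by
    obtain ⟨χ, hχ⟩ := this
    exact ⟨RingHom.ker χ, RingHom.ker_isPrime χ, fun m => (hχ m).symm⟩
  by_cases hδ : ∀ m ∈ C, m.trace ^ 2 = 4 * m.det
  · refine ⟨halfTraceHom C hδ, fun m => ?_⟩
    rw [mem_partialIdealOf_iff_of_trace_sq_eq (hδ m m.2)]
    exact (div_eq_zero_iff.trans (or_iff_left two_ne_zero)).symm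
  · simp only [not_forall] at hδ
    obtain ⟨a, haC, ha⟩ := hδ
    obtain ⟨e, he, htr, hcomm⟩ := exists_isIdempotentElem_commute ha
    exact exists_ringHom_of_forall_commute hS he htr fun m hm => hcomm m (hC a haC m hm)

theorem exists_isIdempotentTransversal (g : Set K) :
    ∃ S : Set (Matrix (Fin 2) (Fin 2) K), IsIdempotentTransversal S ∧
      ∀ t, !![1, t; 0, 0] ∈ S ↔ t ∈ g := by
  have hσ : Function.Involutive fun m : Matrix (Fin 2) (Fin 2) K => 1 - m := sub_sub_cancel 1
  have hf : Function.Injective fun t : K => !![1, t; 0, 0] := fun t t' h =>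
    by simpa using congrFun₂ h 0 1
  obtain ⟨S, hS, hSg⟩ := hσ.exists_transversal hf (fun t t' h => by simpa using congrFun₂ h 0 0) g
  exact ⟨S, fun e he => hS e he.one_sub_ne_self, hSg⟩

theorem mk_set_le_mk_isPrimePartialIdeal [IsSepClosed K] [NeZero (2 : K)] :
    #(Set K) ≤ #{𝔭 : Set (Matrix (Fin 2) (Fin 2) K) // IsPrimePartialIdeal 𝔭} := by
  choose S hS hSg using exists_isIdempotentTransversal (K := K)
  refine mk_le_of_injective (f := fun g => ⟨_, isPrimePartialIdeal_partialIdealOf (hS g)⟩)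
    fun g g' h => Set.ext fun t => ?_
  have hdet : (!![1, t; 0, 0] : Matrix (Fin 2) (Fin 2) K).det = 0 := by simp [det_fin_two]
  have htr : (!![1, t; 0, 0] : Matrix (Fin 2) (Fin 2) K).trace = 1 := by simp [trace_fin_two]
  rw [← hSg, ← hSg, ← mem_partialIdealOf_iff_of_det_eq_zero_of_trace_eq_one (S := S g) hdet htr,
    ← mem_partialIdealOf_iff_of_det_eq_zero_of_trace_eq_one (S := S g') hdet htr]
  exact Set.ext_iff.mp (congrArg Subtype.val h) _

end Matrix

/-- The set of prime partial ideals of `M₂(ℂ)` has cardinality `2 ^ (2 ^ ℵ₀)`;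
in particular, `M₂(ℂ)` has a prime partial ideal. -/
theorem card_prime_partial_ideals_matrix_two :
    Cardinal.mk {𝔭 : Set (Matrix (Fin 2) (Fin 2) ℂ) // IsPrimePartialIdeal 𝔭}
        = (2 : Cardinal) ^ ((2 : Cardinal) ^ Cardinal.aleph0) ∧
      ∃ 𝔭 : Set (Matrix (Fin 2) (Fin 2) ℂ), IsPrimePartialIdeal 𝔭 := by
  have hM : #(Matrix (Fin 2) (Fin 2) ℂ) = 𝔠 := by
    rw [Matrix, mk_arrow, mk_arrow, mk_complex, mk_fin, lift_natCast, lift_id, lift_id,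
      ← power_mul, ← Nat.cast_mul]
    exact power_nat_eq aleph0_le_continuum (by norm_num)
  refine ⟨le_antisymm ?_ ?_, ?_⟩
  · calc _ ≤ #(Set (Matrix (Fin 2) (Fin 2) ℂ)) := mk_subtype_le _
      _ = _ := by rw [mk_set, hM, two_power_aleph0]
  · calc (2 : Cardinal) ^ (2 : Cardinal) ^ ℵ₀ = #(Set ℂ) := by
          rw [mk_set, mk_complex, two_power_aleph0]
      _ ≤ _ := Matrix.mk_set_le_mk_isPrimePartialIdeal
  · obtain ⟨S, hS, -⟩ := Matrix.exists_isIdempotentTransversal (∅ : Set ℂ)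
    exact ⟨_, Matrix.isPrimePartialIdeal_partialIdealOf hS⟩
end

section
/- Every maximal left ideal of a ring R is a completely prime left ideal. Consequently, every nonzero ring has a completely prime left ideal. -/
/-- A left ideal `𝔭` of a ring `R` is *completely prime* if `𝔭 ≠ R` and for all
`a, b ∈ R`, if `𝔭 * b ⊆ 𝔭` and `a * b ∈ 𝔭`, then `a ∈ 𝔭` or `b ∈ 𝔭`.
(Here `Ideal R` means a left ideal of the possibly noncommutative ring `R`.) -/
def IsCompletelyPrimeLeftIdeal {R : Type*} [Ring R] (𝔭 : Ideal R) : Prop :=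
  𝔭 ≠ ⊤ ∧ ∀ a b : R, (∀ x ∈ 𝔭, x * b ∈ 𝔭) → a * b ∈ 𝔭 → a ∈ 𝔭 ∨ b ∈ 𝔭

/-! If `𝔭 b ⊆ 𝔭` and `a b ∈ 𝔭` with `a ∉ 𝔭`, the left ideal `{x | x b ∈ 𝔭}` (the preimage of `𝔭`
under the left-linear map `x ↦ x b`) strictly contains the maximal left ideal `𝔭`, so it is all
of `R`; evaluating at `1` gives `b ∈ 𝔭`. -/

namespace Ideal

variable {R : Type*} [Ring R]

theorem mem_comap_toSpanSingleton {I : Ideal R} {b x : R} :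
    x ∈ Submodule.comap (LinearMap.toSpanSingleton R R b) I ↔ x * b ∈ I :=
  Iff.rfl

theorem IsMaximal.mem_of_mul_mem_of_notMem {𝔭 : Ideal R} (h𝔭 : 𝔭.IsMaximal) {a b : R}
    (hb : ∀ x ∈ 𝔭, x * b ∈ 𝔭) (hab : a * b ∈ 𝔭) (ha : a ∉ 𝔭) : b ∈ 𝔭 := by
  set J := Submodule.comap (LinearMap.toSpanSingleton R R b) 𝔭
  have h𝔭J : 𝔭 < J := SetLike.lt_iff_le_and_exists.2 ⟨hb, a, hab, ha⟩
  have hJ : J = ⊤ := h𝔭.1.2 J h𝔭J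
  have h1J : (1 : R) ∈ J := hJ ▸ Submodule.mem_top
  simpa using mem_comap_toSpanSingleton.1 h1J

theorem IsMaximal.isCompletelyPrimeLeftIdeal {𝔭 : Ideal R} (h𝔭 : 𝔭.IsMaximal) :
    IsCompletelyPrimeLeftIdeal 𝔭 :=
  ⟨h𝔭.ne_top, fun _ _ hb hab =>
    or_iff_not_imp_left.2 (h𝔭.mem_of_mul_mem_of_notMem hb hab)⟩

end Ideal

/-- Every maximal left ideal of a ring is a completely prime left ideal; consequently,
every nonzero ring has a completely prime left ideal. -/
theorem maximal_isCompletelyPrime_and_exists {R : Type*} [Ring R] :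
    (∀ 𝔭 : Ideal R, 𝔭.IsMaximal → IsCompletelyPrimeLeftIdeal 𝔭) ∧
      (Nontrivial R → ∃ 𝔭 : Ideal R, IsCompletelyPrimeLeftIdeal 𝔭) :=
  ⟨fun _ h𝔭 => h𝔭.isCompletelyPrimeLeftIdeal, fun _ =>
    (Ideal.exists_maximal R).imp fun _ h𝔭 => h𝔭.isCompletelyPrimeLeftIdeal⟩
end
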